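/- Let L/L₂ be a quadratic separable extension with nontrivial automorphism σ, and let λ ∈ L satisfy λ + σ(λ) = 1. Then the map j_λ : (u,v) ↦ (u, v - λ·u·σ(u)) is a group isomorphism from H(L,L₂) onto the group H^λ = {(x,y) ∈ L × L : y + σ(y) = 0} with multiplication (x₁,y₁)·(x₂,y₂) = (x₁+x₂, y₁+y₂ - λ·x₁·σ(x₂) + σ(λ·x₁)·x₂). -/

import Mathlib

/-!
Let `σ` be an involution of a commutative ring and `λ + σ λ = 1`. Subtracting `λ u σ(u)` from the
second coordinate turns the relation `v + σ v = u σ u` of `H(L, L₂)` into `y + σ y = 0` and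
transports the law `v₁ + v₂ + σ(u₁) u₂` to the twisted law of `H^λ`. Each group axiom of `H^λ` is
a ring identity in `x, y, λ` and their conjugates.
-/

namespace Heisenberg

variable {R : Type*} [CommRing R] (σ : R →+* R) (lam : R)

def carrier : Set (R × R) := {p | p.2 + σ p.2 = p.1 * σ p.1}

def mul (p q : R × R) : R × R := (p.1 + q.1, p.2 + q.2 + σ p.1 * q.1)

def twistedCarrier : Set (R × R) := {p | p.2 + σ p.2 = 0}

def twistedMul (p q : R × R) : R × R :=
  (p.1 + q.1, p.2 + q.2 - lam * p.1 * σ q.1 + σ (lam * p.1) * q.1)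

/-- The image under `twist` of the inverse `(-u, σ v)` of `(u, v)` in `carrier σ`. -/
def twistedInv (p : R × R) : R × R := (-p.1, -p.2 - (lam - σ lam) * p.1 * σ p.1)

def twist (p : R × R) : R × R := (p.1, p.2 - lam * p.1 * σ p.1)

def untwist (p : R × R) : R × R := (p.1, p.2 + lam * p.1 * σ p.1)

variable {σ}

theorem zero_mem_twistedCarrier : ((0, 0) : R × R) ∈ twistedCarrier σ := by
  simp [twistedCarrier]

theorem twistedMul_mem (hσ : Function.Involutive σ) {p q : R × R}
    (hp : p ∈ twistedCarrier σ) (hq : q ∈ twistedCarrier σ) :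
    twistedMul σ lam p q ∈ twistedCarrier σ := by
  simp only [twistedCarrier, twistedMul, Set.mem_ofPred_eq] at *
  simp only [map_add, map_sub, map_mul, hσ _]
  linear_combination hp + hq

theorem twistedMul_zero (p : R × R) : twistedMul σ lam p (0, 0) = p := by
  simp [twistedMul]

theorem zero_twistedMul (p : R × R) : twistedMul σ lam (0, 0) p = p := by
  simp [twistedMul]

theorem twistedInv_mem (hσ : Function.Involutive σ) {p : R × R}
    (hp : p ∈ twistedCarrier σ) : twistedInv σ lam p ∈ twistedCarrier σ := by
  simp only [twistedCarrier, twistedInv, Set.mem_ofPred_eq] at *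
  simp only [map_neg, map_sub, map_mul, hσ _]
  linear_combination -hp

theorem twistedMul_twistedInv (p : R × R) : twistedMul σ lam p (twistedInv σ lam p) = (0, 0) := by
  simp only [twistedMul, twistedInv, map_neg, map_mul, Prod.mk.injEq]
  constructor <;> ring

theorem twistedMul_assoc (p q r : R × R) :
    twistedMul σ lam (twistedMul σ lam p q) r = twistedMul σ lam p (twistedMul σ lam q r) := by
  simp only [twistedMul, map_add, map_mul, Prod.mk.injEq]
  constructor <;> ring

theorem untwist_twist : Function.LeftInverse (untwist σ lam) (twist σ lam) := fun p => by
  simp [twist, untwist]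

theorem twist_untwist : Function.LeftInverse (twist σ lam) (untwist σ lam) := fun p => by
  simp [twist, untwist]

variable {lam}

theorem twist_mapsTo (hσ : Function.Involutive σ) (hlam : lam + σ lam = 1) :
    Set.MapsTo (twist σ lam) (carrier σ) (twistedCarrier σ) := fun p hp => by
  simp only [carrier, twistedCarrier, twist, Set.mem_ofPred_eq] at *
  simp only [map_sub, map_mul, hσ _]
  linear_combination hp - p.1 * σ p.1 * hlam

theorem untwist_mapsTo (hσ : Function.Involutive σ) (hlam : lam + σ lam = 1) :
    Set.MapsTo (untwist σ lam) (twistedCarrier σ) (carrier σ) := fun p hp => by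
  simp only [carrier, twistedCarrier, untwist, Set.mem_ofPred_eq] at *
  simp only [map_add, map_mul, hσ _]
  linear_combination hp + p.1 * σ p.1 * hlam

theorem twist_bijOn (hσ : Function.Involutive σ) (hlam : lam + σ lam = 1) :
    Set.BijOn (twist σ lam) (carrier σ) (twistedCarrier σ) :=
  Set.InvOn.bijOn ⟨(untwist_twist lam).leftInvOn _, (twist_untwist lam).leftInvOn _⟩
    (twist_mapsTo hσ hlam) (untwist_mapsTo hσ hlam)

theorem twist_mul (hlam : lam + σ lam = 1) (p q : R × R) :
    twist σ lam (mul σ p q) = twistedMul σ lam (twist σ lam p) (twist σ lam q) := by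
  simp only [twist, mul, twistedMul, map_add, map_mul, Prod.mk.injEq]
  exact ⟨trivial, by linear_combination -σ p.1 * q.1 * hlam⟩

end Heisenberg

open Heisenberg in
theorem stmt_1_general {L : Type*} [Field L] (σ : L →+* L)
    (hinv : ∀ x, σ (σ x) = x)
    (lam : L) (hlam : lam + σ lam = 1) :
    let H : Set (L × L) := {p | p.2 + σ p.2 = p.1 * σ p.1}
    let mulH : L × L → L × L → L × L :=
      fun p q => (p.1 + q.1, p.2 + q.2 + σ p.1 * q.1)
    let Hlam : Set (L × L) := {p | p.2 + σ p.2 = 0}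
    let mulLam : L × L → L × L → L × L :=
      fun p q => (p.1 + q.1, p.2 + q.2 - lam * p.1 * σ q.1 + σ (lam * p.1) * q.1)
    let j : L × L → L × L := fun p => (p.1, p.2 - lam * p.1 * σ p.1)
    -- H^λ is a group under mulLam:
    (∀ p ∈ Hlam, ∀ q ∈ Hlam, mulLam p q ∈ Hlam) ∧
    ((0, 0) : L × L) ∈ Hlam ∧
    (∀ p ∈ Hlam, mulLam p ((0 : L), (0 : L)) = p ∧ mulLam ((0 : L), (0 : L)) p = p) ∧
    (∀ p ∈ Hlam, (-p.1, -p.2 - (lam - σ lam) * p.1 * σ p.1) ∈ Hlam ∧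
      mulLam p (-p.1, -p.2 - (lam - σ lam) * p.1 * σ p.1) = ((0 : L), (0 : L))) ∧
    (∀ p q r : L × L, mulLam (mulLam p q) r = mulLam p (mulLam q r)) ∧
    -- j_λ is a group isomorphism from H onto H^λ:
    Set.BijOn j H Hlam ∧
    (∀ p ∈ H, ∀ q ∈ H, j (mulH p q) = mulLam (j p) (j q)) :=
  ⟨fun _ hp _ hq => twistedMul_mem lam hinv hp hq,
    zero_mem_twistedCarrier,
    fun p _ => ⟨twistedMul_zero lam p, zero_twistedMul lam p⟩,
    fun p hp => ⟨twistedInv_mem lam hinv hp, twistedMul_twistedInv lam p⟩,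
    twistedMul_assoc lam,
    twist_bijOn hinv hlam,
    fun p _ q _ => twist_mul hlam p q⟩

/-- For a quadratic separable extension `L/L₂` with nontrivial
automorphism `σ` and `λ` of trace `1`, the map `j_λ : (u,v) ↦ (u, v - λ·u·σ u)`
is a group isomorphism from `H(L,L₂)` onto the group
`H^λ = {(x,y) : y + σ y = 0}` with law
`(x₁,y₁)·(x₂,y₂) = (x₁+x₂, y₁+y₂ - λ x₁ σ x₂ + σ(λ x₁) x₂)`. -/
theorem stmt_1 {L : Type*} [Field L] (σ : L →+* L)
    (hinv : ∀ x, σ (σ x) = x) (hne : σ ≠ RingHom.id L)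
    (lam : L) (hlam : lam + σ lam = 1) :
    let H : Set (L × L) := {p | p.2 + σ p.2 = p.1 * σ p.1}
    let mulH : L × L → L × L → L × L :=
      fun p q => (p.1 + q.1, p.2 + q.2 + σ p.1 * q.1)
    let Hlam : Set (L × L) := {p | p.2 + σ p.2 = 0}
    let mulLam : L × L → L × L → L × L :=
      fun p q => (p.1 + q.1, p.2 + q.2 - lam * p.1 * σ q.1 + σ (lam * p.1) * q.1)
    let j : L × L → L × L := fun p => (p.1, p.2 - lam * p.1 * σ p.1)
    -- H^λ is a group under mulLam:
    (∀ p ∈ Hlam, ∀ q ∈ Hlam, mulLam p q ∈ Hlam) ∧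
    ((0, 0) : L × L) ∈ Hlam ∧
    (∀ p ∈ Hlam, mulLam p ((0 : L), (0 : L)) = p ∧ mulLam ((0 : L), (0 : L)) p = p) ∧
    (∀ p ∈ Hlam, (-p.1, -p.2 - (lam - σ lam) * p.1 * σ p.1) ∈ Hlam ∧
      mulLam p (-p.1, -p.2 - (lam - σ lam) * p.1 * σ p.1) = ((0 : L), (0 : L))) ∧
    (∀ p q r : L × L, mulLam (mulLam p q) r = mulLam p (mulLam q r)) ∧
    -- j_λ is a group isomorphism from H onto H^λ:
    Set.BijOn j H Hlam ∧
    (∀ p ∈ H, ∀ q ∈ H, j (mulH p q) = mulLam (j p) (j q)) :=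
  stmt_1_general σ hinv lam hlam
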